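/- arXiv:1302.2341 — 4 statements merged into one kernel-verified Lean document; each statement's English description precedes it below -/
import Mathlib

section
/- For all absolutely continuous curves α, β:[0,1]→ℝ^d, the associated measures satisfy ‖μ_α − μ_β‖_w ≤ ‖α − β‖_AC, i.e. for every Lipschitz function f:P^{d-1}→ℝ with ‖f‖_𝓛 ≤ 1 one has |∫ f dμ_α − ∫ f dμ_β| ≤ ∫_0^1 |α'(t) − β'(t)| dt. -/
open MeasureTheory Set
open scoped RealInnerProductSpace ENNReal NNReal

noncomputable section

/-- Euclidean space `ℝ^d`. -/
abbrev Euc (d : ℕ) : Type := EuclideanSpace ℝ (Fin d)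

/-- The unit sphere `S^{d-1}` in `ℝ^d`. -/
abbrev Sph (d : ℕ) : Type := Metric.sphere (0 : Euc d) 1

/-- The antipodal equivalence relation on the sphere. -/
def projRel (d : ℕ) : Setoid (Sph d) where
  r x y := (x : Euc d) = (y : Euc d) ∨ (x : Euc d) = -(y : Euc d)
  iseqv := by
    refine ⟨fun x => Or.inl rfl, ?_, ?_⟩
    · rintro x y (h | h)
      · exact Or.inl h.symm
      · exact Or.inr (by rw [h, neg_neg])
    · rintro x y z (h1 | h1) (h2 | h2)
      · exact Or.inl (h1.trans h2)
      · exact Or.inr (h1.trans h2)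
      · exact Or.inr (by rw [h1, h2])
      · exact Or.inl (by rw [h1, h2, neg_neg])

/-- Real projective space `P^{d-1}`, as the quotient of the sphere identifying
antipodal points. -/
abbrev Proj (d : ℕ) : Type := Quotient (projRel d)

/-- The projection `π : S^{d-1} → P^{d-1}`. -/
def projQ {d : ℕ} (x : Sph d) : Proj d := Quotient.mk (projRel d) x

/-- The unit vector in the direction of a nonzero vector `v`. -/
def unitize {d : ℕ} (v : Euc d) (hv : v ≠ 0) : Sph d :=
  ⟨‖v‖⁻¹ • v, by
    rw [mem_sphere_zero_iff_norm, norm_smul, norm_inv, norm_norm,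
      inv_mul_cancel₀ (norm_ne_zero_iff.mpr hv)]⟩

/-- The degree-1 homogeneous extension `f̂ : ℝ^d → ℝ` of a function
`f : P^{d-1} → ℝ`, determined by `f̂(rξ) = |r| f(π ξ)` for `ξ` on the sphere. -/
def hext {d : ℕ} (f : Proj d → ℝ) (v : Euc d) : ℝ :=
  haveI := Classical.propDecidable (v = 0)
  if hv : v = 0 then 0 else ‖v‖ * f (projQ (unitize v hv))

/-- `IsACDeriv α g` : the curve `α` is absolutely continuous on `[0,1]`
with (a.e.) derivative `g`, i.e. `α` is the indefinite integral of the
integrable function `g`. -/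
def IsACDeriv {V : Type*} [NormedAddCommGroup V] [NormedSpace ℝ V]
    (α g : ℝ → V) : Prop :=
  IntervalIntegrable g volume 0 1 ∧
  ∀ t ∈ Icc (0:ℝ) 1, α t = α 0 + ∫ s in (0:ℝ)..t, g s

/-- `IsCurveMeasure g μ` : `μ` is the measure on projective space associated
(via the Riesz representation) to a curve with derivative `g`; it is the finite
Borel measure satisfying `∫ f dμ = ∫_0^1 f̂(g t) dt` for all continuous `f`. -/
def IsCurveMeasure {d : ℕ} (g : ℝ → Euc d) (μ : Measure (Proj d)) : Prop :=
  IsFiniteMeasure μ ∧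
  ∀ f : Proj d → ℝ, Continuous f → ∫ x, f x ∂μ = ∫ t in (0:ℝ)..1, hext f (g t)

lemma minNorm_neg_right {d : ℕ} (x y : Euc d) :
    min ‖x - -y‖ ‖x + -y‖ = min ‖x - y‖ ‖x + y‖ := by
  rw [sub_neg_eq_add, ← sub_eq_add_neg, min_comm]

lemma minNorm_neg_left {d : ℕ} (x y : Euc d) :
    min ‖-x - y‖ ‖-x + y‖ = min ‖x - y‖ ‖x + y‖ := by
  have h1 : -x - y = -(x + y) := by abel
  have h2 : -x + y = -(x - y) := by abel
  rw [h1, h2, norm_neg, norm_neg, min_comm]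

/-- The metric `d_P` on projective space: `d_P(x,y)` is the (Euclidean) distance
between the antipodal pairs `π⁻¹(x)` and `π⁻¹(y)` on the sphere. -/
def dProj {d : ℕ} : Proj d → Proj d → ℝ :=
  Quotient.lift₂ (fun x y : Sph d => min ‖(x : Euc d) - y‖ ‖(x : Euc d) + y‖)
    (by
      rintro x y x' y' (hx | hx) (hy | hy) <;> beta_reduce <;>
        simp only [hx, hy, minNorm_neg_right, minNorm_neg_left])

/-- `LipTest f B L` : the function `f : P^{d-1} → ℝ` is bounded by `B` and
Lipschitz with constant `L` for the metric `d_P`; in this case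
`‖f‖_𝓛 = ‖f‖_∞ + Lip(f) ≤ B + L`. -/
def LipTest {d : ℕ} (f : Proj d → ℝ) (B L : ℝ) : Prop :=
  0 ≤ L ∧ (∀ x, |f x| ≤ B) ∧ ∀ x y, |f x - f y| ≤ L * dProj x y

/-
The homogeneous extension `f̂` of a test function `f` with `‖f‖_∞ ≤ B` and `Lip f ≤ L` is
`(B + L)`-Lipschitz on `ℝ^d`: writing `v̂ = v / ‖v‖`, for `‖w‖ ≤ ‖v‖` split
`f̂ v - f̂ w = (‖v‖ - ‖w‖) f(π v̂) + ‖w‖ (f(π v̂) - f(π ŵ))`, bound the first term by `B ‖v - w‖`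
and the second by `L ‖w‖ ‖v̂ - ŵ‖ ≤ L ‖v - w‖`. Integrating `|f̂(α') - f̂(β')| ≤ |α' - β'|`
over `[0,1]` gives the claim.
-/

lemma mul_norm_sub_le_norm_smul_sub_smul {E : Type*} [NormedAddCommGroup E]
    [InnerProductSpace ℝ E] {a b : E} (ha : ‖a‖ = 1) (hb : ‖b‖ = 1) {r s : ℝ} (hs : 0 ≤ s)
    (hsr : s ≤ r) : s * ‖a - b‖ ≤ ‖r • a - s • b‖ := by
  have hab : ⟪a, b⟫ ≤ 1 := by simpa [ha, hb] using real_inner_le_norm a b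
  have hsq : (s * ‖a - b‖) ^ 2 ≤ ‖r • a - s • b‖ ^ 2 := by
    rw [mul_pow, norm_sub_sq_real, norm_sub_sq_real, real_inner_smul_left, real_inner_smul_right,
      norm_smul, norm_smul, ha, hb, Real.norm_eq_abs, Real.norm_eq_abs]
    -- the difference of the two sides is `(r - s) (r + s - 2 s ⟪a, b⟫)`
    nlinarith [sq_abs r, sq_abs s,
      mul_nonneg (mul_nonneg hs (sub_nonneg.mpr hsr)) (sub_nonneg.mpr hab)]
  exact (pow_le_pow_iff_left₀ (by positivity) (norm_nonneg _) two_ne_zero).mp hsq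

section Proj

variable {d : ℕ}

lemma dProj_projQ_le_dist (x y : Sph d) : dProj (projQ x) (projQ y) ≤ dist x y :=
  min_le_left _ _

lemma coe_unitize (v : Euc d) (hv : v ≠ 0) : (unitize v hv : Euc d) = ‖v‖⁻¹ • v := rfl

lemma norm_mul_dProj_unitize_le {v w : Euc d} (hv : v ≠ 0) (hw : w ≠ 0) (hwv : ‖w‖ ≤ ‖v‖) :
    ‖w‖ * dProj (projQ (unitize v hv)) (projQ (unitize w hw)) ≤ ‖v - w‖ := by
  calc ‖w‖ * dProj (projQ (unitize v hv)) (projQ (unitize w hw))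
      ≤ ‖w‖ * ‖(unitize v hv : Euc d) - unitize w hw‖ :=
        mul_le_mul_of_nonneg_left (dProj_projQ_le_dist _ _) (norm_nonneg _)
    _ ≤ ‖‖v‖ • (unitize v hv : Euc d) - ‖w‖ • (unitize w hw : Euc d)‖ :=
        mul_norm_sub_le_norm_smul_sub_smul (norm_eq_of_mem_sphere _) (norm_eq_of_mem_sphere _)
          (norm_nonneg w) hwv
    _ = ‖v - w‖ := by
        rw [coe_unitize, coe_unitize, smul_inv_smul₀ (norm_ne_zero_iff.mpr hv),
          smul_inv_smul₀ (norm_ne_zero_iff.mpr hw)]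

@[simp]
lemma hext_zero (f : Proj d → ℝ) : hext f 0 = 0 := by
  simp [hext]

lemma hext_of_ne_zero (f : Proj d → ℝ) {v : Euc d} (hv : v ≠ 0) :
    hext f v = ‖v‖ * f (projQ (unitize v hv)) := by
  simp [hext, hv]

namespace LipTest

variable {f : Proj d → ℝ} {B L : ℝ}

lemma continuous (hf : LipTest f B L) : Continuous f := by
  obtain ⟨hL, -, hfL⟩ := hf
  refine isQuotientMap_quot_mk.continuous_iff.mpr (LipschitzWith.continuous (K := ⟨L, hL⟩) ?_)
  refine LipschitzWith.of_dist_le_mul fun x y => ?_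
  rw [Real.dist_eq]
  exact (hfL _ _).trans (mul_le_mul_of_nonneg_left (dProj_projQ_le_dist x y) hL)

lemma abs_hext_sub_le_of_norm_le (hf : LipTest f B L) {v w : Euc d} (hwv : ‖w‖ ≤ ‖v‖) :
    |hext f v - hext f w| ≤ (B + L) * ‖v - w‖ := by
  obtain ⟨hL, hfB, hfL⟩ := hf
  rcases eq_or_ne v 0 with rfl | hv
  · have hw : w = 0 := norm_le_zero_iff.mp (by simpa using hwv)
    simp [hw]
  rcases eq_or_ne w 0 with rfl | hw
  · rw [hext_of_ne_zero f hv, hext_zero, sub_zero, sub_zero, abs_mul, abs_norm]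
    nlinarith [hfB (projQ (unitize v hv)), norm_nonneg v]
  set a := projQ (unitize v hv)
  set b := projQ (unitize w hw)
  have hsplit : hext f v - hext f w = (‖v‖ - ‖w‖) * f a + ‖w‖ * (f a - f b) := by
    rw [hext_of_ne_zero f hv, hext_of_ne_zero f hw]; ring
  calc |hext f v - hext f w|
      ≤ |‖v‖ - ‖w‖| * |f a| + ‖w‖ * |f a - f b| := by
        rw [hsplit, ← abs_norm w, ← abs_mul, ← abs_mul, abs_norm]; exact abs_add_le _ _
    _ ≤ ‖v - w‖ * B + L * (‖w‖ * dProj a b) := by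
        gcongr ?_ + ?_
        · exact mul_le_mul (abs_norm_sub_norm_le v w) (hfB a) (abs_nonneg _) (norm_nonneg _)
        · nlinarith [hfL a b, norm_nonneg w]
    _ ≤ (B + L) * ‖v - w‖ := by
        nlinarith [mul_le_mul_of_nonneg_left (norm_mul_dProj_unitize_le hv hw hwv) hL]

lemma abs_hext_sub_le (hf : LipTest f B L) (v w : Euc d) :
    |hext f v - hext f w| ≤ (B + L) * ‖v - w‖ := by
  rcases le_total ‖w‖ ‖v‖ with h | h
  · exact hf.abs_hext_sub_le_of_norm_le h
  · rw [abs_sub_comm, norm_sub_rev]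
    exact hf.abs_hext_sub_le_of_norm_le h

lemma continuous_hext (hf : LipTest f B L) : Continuous (hext f) :=
  (LipschitzWith.of_dist_le' fun v w => by
    rw [Real.dist_eq, dist_eq_norm]
    exact hf.abs_hext_sub_le v w).continuous

lemma intervalIntegrable_hext_comp (hf : LipTest f B L) {g : ℝ → Euc d} {a b : ℝ}
    (hg : IntervalIntegrable g volume a b) :
    IntervalIntegrable (fun t => hext f (g t)) volume a b := by
  refine (hg.norm.const_mul (B + L)).mono_fun'
    (hf.continuous_hext.comp_aestronglyMeasurable hg.def'.aestronglyMeasurable)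
    (ae_of_all _ fun t => ?_)
  simpa only [Real.norm_eq_abs, hext_zero, sub_zero] using hf.abs_hext_sub_le (g t) 0

end LipTest

end Proj

theorem stmt4_general {d : ℕ} (α gα β gβ : ℝ → Euc d)
    (hα : IsACDeriv α gα) (hβ : IsACDeriv β gβ)
    (μα μβ : Measure (Proj d))
    (hμα : IsCurveMeasure gα μα) (hμβ : IsCurveMeasure gβ μβ)
    (f : Proj d → ℝ) (B L : ℝ) (hf : LipTest f B L) (hBL : B + L ≤ 1) :
    |(∫ x, f x ∂μα) - ∫ x, f x ∂μβ| ≤ ∫ t in (0:ℝ)..1, ‖gα t - gβ t‖ := by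
  have iα := hf.intervalIntegrable_hext_comp hα.1
  have iβ := hf.intervalIntegrable_hext_comp hβ.1
  rw [hμα.2 f hf.continuous, hμβ.2 f hf.continuous, ← intervalIntegral.integral_sub iα iβ]
  refine (intervalIntegral.abs_integral_le_integral_abs zero_le_one).trans ?_
  refine intervalIntegral.integral_mono_on zero_le_one (iα.sub iβ).abs (hα.1.sub hβ.1).norm
    fun t _ => (hf.abs_hext_sub_le (gα t) (gβ t)).trans (mul_le_of_le_one_left (norm_nonneg _) hBL)

/-- For all absolutely continuous curves `α, β : [0,1] → ℝ^d`,
the associated measures satisfy `‖μ_α − μ_β‖_w ≤ ‖α − β‖_AC`: for every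
Lipschitz `f : P^{d-1} → ℝ` with `‖f‖_𝓛 ≤ 1` one has
`|∫ f dμ_α − ∫ f dμ_β| ≤ ∫_0^1 |α'(t) − β'(t)| dt`. -/
theorem stmt4 {d : ℕ} (hd : 1 ≤ d) (α gα β gβ : ℝ → Euc d)
    (hα : IsACDeriv α gα) (hβ : IsACDeriv β gβ)
    (μα μβ : Measure (Proj d))
    (hμα : IsCurveMeasure gα μα) (hμβ : IsCurveMeasure gβ μβ)
    (f : Proj d → ℝ) (B L : ℝ) (hf : LipTest f B L) (hBL : B + L ≤ 1) :
    |(∫ x, f x ∂μα) - ∫ x, f x ∂μβ| ≤ ∫ t in (0:ℝ)..1, ‖gα t - gβ t‖ :=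
  stmt4_general α gα β gβ hα hβ μα μβ hμα hμβ f B L hf hBL
end
end

section
/- Two broken lines in ℝ^d are rearrangements of one another if and only if they produce the same measure on P^{d-1}; moreover the measure produced by a broken line is necessarily a discrete measure (a finite linear combination of point masses). -/
open MeasureTheory Set
open scoped RealInnerProductSpace ENNReal NNReal

noncomputable section

/-- `IsSubdivision L P` : the list of segments `P` is a decomposition of the
broken line with (directed) segment vectors `L`, obtained by subdividing each
segment `v` of `L` into consecutive subsegments `r • v` with positive
coefficients `r` summing to `1`. -/
def IsSubdivision {d : ℕ} (L : List (Euc d)) (P : List (List (Euc d))) : Prop :=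
  List.Forall₂ (fun v seg => ∃ c : List ℝ, (∀ r ∈ c, 0 < r) ∧ c.sum = 1 ∧
    seg = c.map (fun r => r • v)) L P

/-- Two broken lines (given by their lists of segment vectors) are
rearrangements of one another if they admit decompositions whose respective
segments are translates of one another (as undirected segments, i.e. up to
sign of the direction vector). -/
def Rearrangement {d : ℕ} (L₁ L₂ : List (Euc d)) : Prop :=
  ∃ P₁ P₂ : List (List (Euc d)), IsSubdivision L₁ P₁ ∧ IsSubdivision L₂ P₂ ∧
    Multiset.Rel (fun v w => v = w ∨ v = -w)
      ((P₁.map (fun l => (l : Multiset (Euc d)))).sum)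
      ((P₂.map (fun l => (l : Multiset (Euc d)))).sum)

/-!
The derivative of a broken line with segment vectors `v₁, …, vₘ` is constant on each parameter
interval, so its measure is `∑ ‖vₖ‖ δ_{[vₖ]}`; in particular it is discrete. Both being
rearrangements and having equal measures amount to the sums `∑ f̂(vₖ)` agreeing for every `f`.
Since `f̂` is even and positively homogeneous, subdividing or reversing segments does not change
these sums. Conversely, if the sums agree, the first segment `v` of one line has a parallel partner
`r • v` in the other; splitting the longer of the two so that one piece matches the shorter leaves
a pair of lists with fewer segments in total and still equal sums, and induction finishes.
-/

theorem eq_or_eq_neg_of_forall_mul_eq_mul {ι R : Type*} [CommRing R] [IsDomain R]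
    {x y : ι → R} (h : ∀ i j, x i * x j = y i * y j) : x = y ∨ x = -y := by
  by_cases hx : x = 0
  · subst hx
    left
    ext i
    simpa [eq_comm] using h i i
  obtain ⟨i, hi⟩ : ∃ i, x i ≠ 0 := by
    by_contra! h0
    exact hx (funext h0)
  rcases mul_self_eq_mul_self_iff.mp (h i i) with hxy | hxy
  · left
    ext j
    exact mul_left_cancel₀ hi (by rw [h i j, hxy])
  · right
    ext j
    refine mul_left_cancel₀ hi ?_
    rw [h i j, hxy, Pi.neg_apply, neg_mul_neg]

section Topology

variable {d : ℕ}

-- Embedding `P^{d-1}` by `±x ↦ x xᵀ` makes it metrizable and second countable, hence Borel, so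
-- finite measures on it are determined by their integrals of continuous functions.
def veronese : Proj d → Fin d → Fin d → ℝ :=
  Quotient.lift (fun x : Sph d => fun i j => (x : Euc d) i * (x : Euc d) j) <| by
    rintro x y (h | h) <;> simp [h]

lemma isEmbedding_veronese : Topology.IsEmbedding (veronese (d := d)) := by
  refine (Continuous.isClosedEmbedding (continuous_quot_lift _ (by fun_prop)) ?_).isEmbedding
  rintro ⟨x⟩ ⟨y⟩ h
  refine Quotient.sound (show (x : Euc d) = y ∨ (x : Euc d) = -(y : Euc d) from ?_)
  simpa [← (WithLp.ofLp_injective 2).eq_iff] using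
    eq_or_eq_neg_of_forall_mul_eq_mul fun i j => congrFun (congrFun h i) j

instance : TopologicalSpace.MetrizableSpace (Proj d) := isEmbedding_veronese.metrizableSpace

instance : SecondCountableTopology (Proj d) := isEmbedding_veronese.secondCountableTopology

end Topology

theorem intervalIntegral_zero_one_eq_sum {E : Type*} [NormedAddCommGroup E] [NormedSpace ℝ E]
    [CompleteSpace E]
    {m : ℕ} (hm : 0 < m) {φ : ℝ → E} {c : Fin m → E}
    (hφ : ∀ k : Fin m, ∀ t ∈ Ioo ((k : ℝ) / m) (((k : ℝ) + 1) / m), φ t = c k) :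
    ∫ t in (0 : ℝ)..1, φ t = (m : ℝ)⁻¹ • ∑ k, c k := by
  set a : ℕ → ℝ := fun k => k / m
  have hm' : (m : ℝ) ≠ 0 := by positivity
  have hlen : ∀ k : ℕ, a (k + 1) - a k = (m : ℝ)⁻¹ := fun k => by
    simp only [a]; push_cast; field_simp; ring
  have hle : ∀ k : ℕ, a k ≤ a (k + 1) := fun k => by
    linarith [hlen k, inv_pos.mpr (by positivity : (0 : ℝ) < m)]
  have heqOn : ∀ k : Fin m, EqOn φ (fun _ => c k) (Ioo (a k) (a (k + 1))) := fun k t ht =>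
    hφ k t (by simpa [a] using ht)
  calc ∫ t in (0 : ℝ)..1, φ t = ∫ t in (a 0)..(a m), φ t := by simp [a, hm']
    _ = ∑ k ∈ Finset.range m, ∫ t in (a k)..(a (k + 1)), φ t := by
      refine (intervalIntegral.sum_integral_adjacent_intervals fun k hk => ?_).symm
      refine (intervalIntegrable_const (c := c ⟨k, hk⟩)).congr_uIoo ?_
      rw [uIoo_of_le (hle k)]
      exact (heqOn ⟨k, hk⟩).symm
    _ = ∑ k : Fin m, ∫ t in (a k)..(a (k + 1)), φ t := (Fin.sum_univ_eq_sum_range _ m).symm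
    _ = (m : ℝ)⁻¹ • ∑ k, c k := by
      rw [Finset.smul_sum]
      refine Finset.sum_congr rfl fun k _ => ?_
      rw [intervalIntegral.integral_congr_Ioo_of_le (hle k) (heqOn k),
        intervalIntegral.integral_const, hlen]

section Hext

variable {d : ℕ}

lemma projQ_unitize_smul {v : Euc d} (hv : v ≠ 0) {r : ℝ} (hr : r ≠ 0) :
    projQ (unitize (r • v) (smul_ne_zero hr hv)) = projQ (unitize v hv) := by
  apply Quotient.sound
  change _ = _ ∨ _ = -_
  simp only [unitize, norm_smul, Real.norm_eq_abs, smul_smul]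
  rcases hr.lt_or_gt with hneg | hpos
  · right
    rw [abs_of_neg hneg, ← neg_smul]
    congr 1
    field_simp
  · left
    rw [abs_of_pos hpos]
    congr 1
    field_simp

lemma hext_smul (f : Proj d → ℝ) (r : ℝ) (v : Euc d) : hext f (r • v) = |r| * hext f v := by
  rcases eq_or_ne r 0 with rfl | hr
  · simp
  rcases eq_or_ne v 0 with rfl | hv
  · simp
  rw [hext_of_ne_zero f (smul_ne_zero hr hv), hext_of_ne_zero f hv, projQ_unitize_smul hv hr,
    norm_smul, Real.norm_eq_abs, mul_assoc]

@[simp]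
lemma hext_neg (f : Proj d → ℝ) (v : Euc d) : hext f (-v) = hext f v := by
  simpa using hext_smul f (-1) v

lemma hext_nonneg {f : Proj d → ℝ} (hf : 0 ≤ f) (v : Euc d) : 0 ≤ hext f v := by
  unfold hext
  split_ifs
  exacts [le_rfl, mul_nonneg (norm_nonneg v) (hf _)]

lemma exists_smul_eq_of_projQ_unitize_eq {v w : Euc d} (hv : v ≠ 0) (hw : w ≠ 0)
    (h : projQ (unitize w hw) = projQ (unitize v hv)) : ∃ r : ℝ, r ≠ 0 ∧ w = r • v := by
  have hw' : w = ‖w‖ • (unitize w hw : Euc d) := by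
    simp [unitize, smul_smul, norm_ne_zero_iff.mpr hw]
  have hr : ‖w‖ * ‖v‖⁻¹ ≠ 0 := by positivity
  rcases Quotient.exact h with h | h <;> rw [h] at hw'
  · exact ⟨‖w‖ * ‖v‖⁻¹, hr, by simpa [unitize, smul_smul] using hw'⟩
  · exact ⟨-(‖w‖ * ‖v‖⁻¹), neg_ne_zero.mpr hr, by simpa [unitize, smul_smul] using hw'⟩

end Hext

section HextSum

variable {d : ℕ}

def hextSum (f : Proj d → ℝ) (L : List (Euc d)) : ℝ := (L.map (hext f)).sum

@[simp]
lemma hextSum_nil (f : Proj d → ℝ) : hextSum f [] = 0 := rfl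

@[simp]
lemma hextSum_cons (f : Proj d → ℝ) (v : Euc d) (L : List (Euc d)) :
    hextSum f (v :: L) = hext f v + hextSum f L := List.sum_cons

lemma List.Perm.hextSum_eq {L₁ L₂ : List (Euc d)} (h : L₁.Perm L₂) (f : Proj d → ℝ) :
    hextSum f L₁ = hextSum f L₂ :=
  (h.map _).sum_eq

lemma hextSum_ofFn {m : ℕ} (f : Proj d → ℝ) (V : Fin m → Euc d) :
    hextSum f (List.ofFn V) = ∑ k, hext f (V k) := by
  simp [hextSum, List.sum_ofFn]

lemma hextSum_nonneg {f : Proj d → ℝ} (hf : 0 ≤ f) (L : List (Euc d)) : 0 ≤ hextSum f L :=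
  List.sum_nonneg (by simpa using fun v _ => hext_nonneg hf v)

lemma exists_smul_mem_of_forall_hextSum_eq {v : Euc d} (hv : v ≠ 0) {L₁ L₂ : List (Euc d)}
    (h : ∀ f, hextSum f (v :: L₁) = hextSum f L₂) : ∃ r : ℝ, r ≠ 0 ∧ r • v ∈ L₂ := by
  set q := projQ (unitize v hv)
  set f : Proj d → ℝ := ({q} : Set (Proj d)).indicator 1
  have hf : 0 ≤ f := Set.indicator_nonneg fun _ _ => zero_le_one
  have hpos : hextSum f L₂ ≠ 0 := by
    rw [← h, hextSum_cons, hext_of_ne_zero f hv]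
    have := hextSum_nonneg hf L₁
    have := norm_pos_iff.mpr hv
    simp only [f, q, Set.indicator_of_mem (Set.mem_singleton _), Pi.one_apply]
    positivity
  obtain ⟨w, hwL, hw⟩ : ∃ w ∈ L₂, hext f w ≠ 0 := by
    by_contra! h0
    exact hpos (List.sum_eq_zero (by simpa using h0))
  have hw0 : w ≠ 0 := by rintro rfl; simp at hw
  have hdir : projQ (unitize w hw0) = q := by
    by_contra hne
    simp [hext_of_ne_zero f hw0, f, hne] at hw
  obtain ⟨r, hr, rfl⟩ := exists_smul_eq_of_projQ_unitize_eq hv hw0 hdir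
  exact ⟨r, hr, hwL⟩

lemma hextSum_sub_abs_smul_cons {v : Euc d} {r : ℝ} {L₁ L₂ : List (Euc d)} (hr : |r| ≤ 1)
    (h : ∀ f, hextSum f (v :: L₁) = hextSum f (r • v :: L₂)) (f : Proj d → ℝ) :
    hextSum f ((1 - |r|) • v :: L₁) = hextSum f L₂ := by
  have := h f
  simp only [hextSum_cons, hext_smul, abs_of_nonneg (sub_nonneg.mpr hr)] at this ⊢
  linarith

end HextSum

section Rearrangement

variable {d : ℕ} {L₁ L₂ L₃ : List (Euc d)}

def pieces (P : List (List (Euc d))) : Multiset (Euc d) :=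
  (P.map (fun l => (l : Multiset (Euc d)))).sum

@[simp]
lemma pieces_nil : pieces ([] : List (List (Euc d))) = 0 := rfl

@[simp]
lemma pieces_cons (s : List (Euc d)) (P : List (List (Euc d))) :
    pieces (s :: P) = s + pieces P := by
  simp [pieces]

lemma List.Perm.pieces_eq {P₁ P₂ : List (List (Euc d))} (h : P₁.Perm P₂) :
    pieces P₁ = pieces P₂ := by
  induction h with
  | nil => rfl
  | cons s _ ih => simp [ih]
  | swap s t P => simp only [pieces_cons]; abel
  | trans _ _ ih₁ ih₂ => exact ih₁.trans ih₂

lemma rearrangement_iff_pieces : Rearrangement L₁ L₂ ↔ ∃ P₁ P₂, IsSubdivision L₁ P₁ ∧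
    IsSubdivision L₂ P₂ ∧ Multiset.Rel (fun v w => v = w ∨ v = -w) (pieces P₁) (pieces P₂) :=
  Iff.rfl

lemma IsSubdivision.sum_map_hext {L : List (Euc d)} {P : List (List (Euc d))}
    (h : IsSubdivision L P) (f : Proj d → ℝ) :
    ((pieces P).map (hext f)).sum = hextSum f L := by
  induction h with
  | nil => simp
  | @cons v _ _ _ hseg _ ih =>
    obtain ⟨c, hc, hc1, rfl⟩ := hseg
    have hterm : (c.map fun r => hext f (r • v)) = c.map fun r => r * hext f v :=
      List.map_congr_left fun r hr => by rw [hext_smul, abs_of_pos (hc r hr)]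
    simp only [pieces_cons, Multiset.map_add, Multiset.sum_add, ih,
      hextSum_cons, Multiset.map_coe, Multiset.sum_coe, List.map_map, Function.comp_def, hterm,
      List.sum_map_mul_right, hc1, List.map_id', one_mul]

lemma Rearrangement.hextSum_eq (h : Rearrangement L₁ L₂) (f : Proj d → ℝ) :
    hextSum f L₁ = hextSum f L₂ := by
  obtain ⟨P₁, P₂, h₁, h₂, hrel⟩ := rearrangement_iff_pieces.mp h
  rw [← h₁.sum_map_hext, ← h₂.sum_map_hext]
  congr 1
  refine Multiset.rel_eq.mp (Multiset.rel_map.mpr (hrel.mono ?_))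
  rintro v - w - (rfl | rfl) <;> simp

namespace Rearrangement

lemma nil : Rearrangement ([] : List (Euc d)) [] :=
  ⟨[], [], .nil, .nil, by simp⟩

lemma symm (h : Rearrangement L₁ L₂) : Rearrangement L₂ L₁ := by
  obtain ⟨P₁, P₂, h₁, h₂, hrel⟩ := rearrangement_iff_pieces.mp h
  refine rearrangement_iff_pieces.mpr ⟨P₂, P₁, h₂, h₁, Multiset.rel_flip.mp (hrel.mono ?_)⟩
  rintro v - w - (rfl | rfl) <;> simp [flip]

lemma perm_right (h : Rearrangement L₁ L₂) (hp : L₂.Perm L₃) : Rearrangement L₁ L₃ := by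
  obtain ⟨P₁, P₂, h₁, h₂, hrel⟩ := rearrangement_iff_pieces.mp h
  obtain ⟨P₃, h₃, hP⟩ := List.perm_comp_forall₂ hp.symm h₂
  exact rearrangement_iff_pieces.mpr ⟨P₁, P₃, h₁, h₃, by rwa [hP.pieces_eq]⟩

lemma cons {v w : Euc d} (hvw : v = w ∨ v = -w) (h : Rearrangement L₁ L₂) :
    Rearrangement (v :: L₁) (w :: L₂) := by
  obtain ⟨P₁, P₂, h₁, h₂, hrel⟩ := rearrangement_iff_pieces.mp h
  refine rearrangement_iff_pieces.mpr ⟨[v] :: P₁, [w] :: P₂,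
    .cons ⟨[1], by simp, by simp, by simp⟩ h₁, .cons ⟨[1], by simp, by simp, by simp⟩ h₂, ?_⟩
  simpa using Multiset.Rel.cons (r := fun v w : Euc d => v = w ∨ v = -w) hvw hrel

lemma of_smul_cons_smul {v : Euc d} {a b : ℝ} (ha : 0 < a) (hb : 0 < b) (hab : a + b = 1)
    (h : Rearrangement (a • v :: b • v :: L₁) L₂) : Rearrangement (v :: L₁) L₂ := by
  obtain ⟨_, P₂, h₁, h₂, hrel⟩ := rearrangement_iff_pieces.mp h
  rcases h₁ with _ | ⟨⟨ca, hca, hca1, rfl⟩, _ | ⟨⟨cb, hcb, hcb1, rfl⟩, h₁⟩⟩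
  refine rearrangement_iff_pieces.mpr
    ⟨(ca.map (· * a) ++ cb.map (· * b)).map (· • v) :: _, P₂, .cons ⟨_, ?_, ?_, rfl⟩ h₁, h₂, ?_⟩
  · simp only [List.mem_append, List.mem_map]
    rintro _ (⟨r, hr, rfl⟩ | ⟨r, hr, rfl⟩)
    exacts [mul_pos (hca r hr) ha, mul_pos (hcb r hr) hb]
  · simp only [List.sum_append, List.sum_map_mul_right, List.map_id', hca1, hcb1, one_mul, hab]
  · convert hrel using 1
    simp only [pieces_cons, List.map_append, List.map_map, Function.comp_def, smul_smul,
      ← Multiset.coe_add, add_assoc]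

lemma cons_smul_of_abs_lt_one {v : Euc d} {r : ℝ} (hr : r ≠ 0) (hr1 : |r| < 1)
    (h : Rearrangement ((1 - |r|) • v :: L₁) L₂) : Rearrangement (v :: L₁) (r • v :: L₂) := by
  refine of_smul_cons_smul (abs_pos.mpr hr) (by linarith) (by ring) (cons ?_ h)
  rcases abs_choice r with h | h <;> simp [h]

theorem of_forall_hextSum_eq {L₁ L₂ : List (Euc d)} (h₁ : ∀ v ∈ L₁, v ≠ 0)
    (h₂ : ∀ w ∈ L₂, w ≠ 0) (h : ∀ f, hextSum f L₁ = hextSum f L₂) : Rearrangement L₁ L₂ :=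
  match L₁, L₂, h₁, h₂, h with
  | [], [], _, _, _ => nil
  | [], w :: _, _, h₂, h => by
    obtain ⟨r, -, hr⟩ := exists_smul_mem_of_forall_hextSum_eq (h₂ w (by simp)) (L₂ := [])
      fun f => (h f).symm
    simp at hr
  | v :: L₁, L₂, h₁, h₂, h => by
    obtain ⟨r, hr, hmem⟩ := exists_smul_mem_of_forall_hextSum_eq (h₁ v (by simp)) h
    obtain ⟨L₂', hperm⟩ : ∃ L₂', L₂.Perm (r • v :: L₂') := ⟨_, List.perm_cons_erase hmem⟩
    have h' : ∀ f, hextSum f (v :: L₁) = hextSum f (r • v :: L₂') := fun f =>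
      (h f).trans (hperm.hextSum_eq f)
    have hv : v ≠ 0 := h₁ v (by simp)
    have h₁' : ∀ u ∈ L₁, u ≠ 0 := fun u hu => h₁ u (List.mem_cons_of_mem _ hu)
    have h₂' : ∀ u ∈ L₂', u ≠ 0 := fun u hu =>
      h₂ u (hperm.symm.subset (List.mem_cons_of_mem _ hu))
    refine perm_right ?_ hperm.symm
    rcases lt_trichotomy |r| 1 with hlt | heq | hgt
    · refine cons_smul_of_abs_lt_one hr hlt (of_forall_hextSum_eq ?_ h₂'
        (hextSum_sub_abs_smul_cons hlt.le h'))
      exact List.forall_mem_cons.mpr ⟨smul_ne_zero (sub_pos.mpr hlt).ne' hv, h₁'⟩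
    · refine cons ?_ (of_forall_hextSum_eq h₁' h₂' fun f => ?_)
      · rcases (abs_eq zero_le_one).mp heq with rfl | rfl <;> simp
      · simpa [heq] using hextSum_sub_abs_smul_cons heq.le h' f
    · have hr' : |r⁻¹| < 1 := by
        rw [abs_inv]
        exact inv_lt_one_of_one_lt₀ hgt
      have h'' : ∀ f, hextSum f (r • v :: L₂') = hextSum f (r⁻¹ • r • v :: L₁) := fun f => by
        simpa [smul_smul, hr] using (h' f).symm
      have := cons_smul_of_abs_lt_one (inv_ne_zero hr) hr' (of_forall_hextSum_eq ?_ h₁'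
        (hextSum_sub_abs_smul_cons hr'.le h''))
      · simpa [smul_smul, hr] using this.symm
      · exact List.forall_mem_cons.mpr
          ⟨smul_ne_zero (sub_pos.mpr hr').ne' (smul_ne_zero hr hv), h₂'⟩
termination_by L₁.length + L₂.length
decreasing_by all_goals (have := hperm.length_eq; simp only [List.length_cons] at *; omega)

end Rearrangement

section BrokenLineMeasure

variable {d : ℕ}

lemma IsCurveMeasure.integral_eq_sum_hext {m : ℕ} (hm : 0 < m) {g : ℝ → Euc d}
    {V : Fin m → Euc d}
    (hg : ∀ k : Fin m, ∀ t ∈ Ioo ((k : ℝ) / m) (((k : ℝ) + 1) / m), g t = (m : ℝ) • V k)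
    {μ : Measure (Proj d)} (hμ : IsCurveMeasure g μ) {f : Proj d → ℝ} (hf : Continuous f) :
    ∫ x, f x ∂μ = ∑ k, hext f (V k) := by
  rw [hμ.2 f hf, intervalIntegral_zero_one_eq_sum hm fun k t ht => by rw [hg k t ht],
    Finset.smul_sum]
  refine Finset.sum_congr rfl fun k _ => ?_
  rw [hext_smul, Nat.abs_cast, smul_eq_mul, ← mul_assoc, inv_mul_cancel₀ (by positivity),
    one_mul]

def brokenLineMeasure {m : ℕ} (V : Fin m → Euc d) (hV : ∀ k, V k ≠ 0) : Measure (Proj d) :=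
  ∑ k, (‖V k‖₊ : ℝ≥0∞) • Measure.dirac (projQ (unitize (V k) (hV k)))

instance {m : ℕ} (V : Fin m → Euc d) (hV : ∀ k, V k ≠ 0) :
    IsFiniteMeasure (brokenLineMeasure V hV) := by
  constructor
  simp [brokenLineMeasure, ENNReal.sum_lt_top]

lemma integral_brokenLineMeasure {m : ℕ} (V : Fin m → Euc d) (hV : ∀ k, V k ≠ 0)
    (f : Proj d → ℝ) : ∫ x, f x ∂brokenLineMeasure V hV = ∑ k, hext f (V k) := by
  rw [brokenLineMeasure, integral_finsetSum_measure fun k _ =>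
    (integrable_dirac enorm_lt_top).smul_measure ENNReal.coe_ne_top]
  refine Finset.sum_congr rfl fun k _ => ?_
  rw [integral_smul_measure, integral_dirac, hext_of_ne_zero f (hV k)]
  simp

lemma IsCurveMeasure.eq_brokenLineMeasure {m : ℕ} (hm : 0 < m) {g : ℝ → Euc d}
    {V : Fin m → Euc d}
    (hg : ∀ k : Fin m, ∀ t ∈ Ioo ((k : ℝ) / m) (((k : ℝ) + 1) / m), g t = (m : ℝ) • V k)
    (hV : ∀ k, V k ≠ 0) {μ : Measure (Proj d)} (hμ : IsCurveMeasure g μ) :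
    μ = brokenLineMeasure V hV :=
  have := hμ.1
  ext_of_forall_integral_eq_of_IsFiniteMeasure fun f => by
    rw [hμ.integral_eq_sum_hext hm hg f.continuous, integral_brokenLineMeasure]

lemma brokenLineMeasure_eq_iff {m n : ℕ} {V : Fin m → Euc d} {W : Fin n → Euc d}
    (hV : ∀ k, V k ≠ 0) (hW : ∀ k, W k ≠ 0) :
    brokenLineMeasure V hV = brokenLineMeasure W hW ↔
      ∀ f : Proj d → ℝ, ∑ k, hext f (V k) = ∑ k, hext f (W k) := by
  simp only [← integral_brokenLineMeasure V hV, ← integral_brokenLineMeasure W hW]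
  exact ⟨fun h f => by rw [h], fun h => ext_of_forall_integral_eq_of_IsFiniteMeasure fun f => h f⟩

end BrokenLineMeasure

theorem stmt7_general {d m n : ℕ} (hm : 1 ≤ m) (hn : 1 ≤ n)
    (A : Fin (m+1) → Euc d) (B : Fin (n+1) → Euc d)
    (hA : ∀ k : Fin m, A k.succ ≠ A k.castSucc)
    (hB : ∀ k : Fin n, B k.succ ≠ B k.castSucc)
    (gA gB : ℝ → Euc d)
    (hgA : ∀ k : Fin m, ∀ t ∈ Ioo ((k : ℝ) / (m : ℝ)) (((k : ℝ) + 1) / (m : ℝ)),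
      gA t = (m : ℝ) • (A k.succ - A k.castSucc))
    (hgB : ∀ k : Fin n, ∀ t ∈ Ioo ((k : ℝ) / (n : ℝ)) (((k : ℝ) + 1) / (n : ℝ)),
      gB t = (n : ℝ) • (B k.succ - B k.castSucc))
    (μA μB : Measure (Proj d))
    (hμA : IsCurveMeasure gA μA) (hμB : IsCurveMeasure gB μB) :
    (Rearrangement (List.ofFn fun k : Fin m => A k.succ - A k.castSucc)
        (List.ofFn fun k : Fin n => B k.succ - B k.castSucc) ↔ μA = μB) ∧
    ∃ (N : ℕ) (p : Fin N → Proj d) (c : Fin N → ℝ≥0),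
      μA = ∑ i, (c i : ℝ≥0∞) • Measure.dirac (p i) := by
  have hVA : ∀ k : Fin m, A k.succ - A k.castSucc ≠ 0 := fun k => sub_ne_zero.mpr (hA k)
  have hVB : ∀ k : Fin n, B k.succ - B k.castSucc ≠ 0 := fun k => sub_ne_zero.mpr (hB k)
  have hμA' := hμA.eq_brokenLineMeasure hm hgA hVA
  have hμB' := hμB.eq_brokenLineMeasure hn hgB hVB
  refine ⟨?_, m, _, _, hμA'⟩
  rw [hμA', hμB', brokenLineMeasure_eq_iff]
  simp only [← hextSum_ofFn]
  exact ⟨fun h => h.hextSum_eq, Rearrangement.of_forall_hextSum_eq (by simpa using hVA)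
    (by simpa using hVB)⟩

/-- Two broken lines in `ℝ^d` are rearrangements of one
another if and only if they produce the same measure on `P^{d-1}`; moreover the
measure produced by a broken line is necessarily a discrete measure (a finite
linear combination of point masses). -/
theorem stmt7 {d m n : ℕ} (hd : 1 ≤ d) (hm : 1 ≤ m) (hn : 1 ≤ n)
    (A : Fin (m+1) → Euc d) (B : Fin (n+1) → Euc d)
    (hA : ∀ k : Fin m, A k.succ ≠ A k.castSucc)
    (hB : ∀ k : Fin n, B k.succ ≠ B k.castSucc)
    (αA gA αB gB : ℝ → Euc d)
    (hαA : IsACDeriv αA gA) (hαB : IsACDeriv αB gB)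
    (hvA : ∀ k : Fin (m+1), αA ((k : ℝ) / (m : ℝ)) = A k)
    (hvB : ∀ k : Fin (n+1), αB ((k : ℝ) / (n : ℝ)) = B k)
    (hgA : ∀ k : Fin m, ∀ t ∈ Ioo ((k : ℝ) / (m : ℝ)) (((k : ℝ) + 1) / (m : ℝ)),
      gA t = (m : ℝ) • (A k.succ - A k.castSucc))
    (hgB : ∀ k : Fin n, ∀ t ∈ Ioo ((k : ℝ) / (n : ℝ)) (((k : ℝ) + 1) / (n : ℝ)),
      gB t = (n : ℝ) • (B k.succ - B k.castSucc))
    (μA μB : Measure (Proj d))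
    (hμA : IsCurveMeasure gA μA) (hμB : IsCurveMeasure gB μB) :
    (Rearrangement (List.ofFn fun k : Fin m => A k.succ - A k.castSucc)
        (List.ofFn fun k : Fin n => B k.succ - B k.castSucc) ↔ μA = μB) ∧
    ∃ (N : ℕ) (p : Fin N → Proj d) (c : Fin N → ℝ≥0),
      μA = ∑ i, (c i : ℝ≥0∞) • Measure.dirac (p i) :=
  stmt7_general hm hn A B hA hB gA gB hgA hgB μA μB hμA hμB
end Rearrangement
end
end

section
/- The correspondence α ↦ μ_α is surjective onto the set of positive finite Borel measures on P^{d-1}: for every positive finite Borel measure μ on P^{d-1} there exists an absolutely continuous curve α:[0,1]→ℝ^d with μ_α = μ. -/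
open MeasureTheory Set
open scoped RealInnerProductSpace ENNReal NNReal

noncomputable section

/-!
Normalize `μ` to a probability measure, lift it to the sphere through a measurable section of
`S^{d-1} → P^{d-1}` (pick the lexicographically positive point of each antipodal pair), and write
the lifted measure as the image of Lebesgue measure on `[0,1]` under a measurable map `φ`, as is
possible for every probability measure on a standard Borel space. The curve with derivative
`μ(P^{d-1}) • φ` has constant speed `μ(P^{d-1})`, so `f̂(α') = μ(P^{d-1}) · f(π ∘ φ)`, whose
integral over `[0,1]` is `∫ f dμ`.
-/

theorem measurableSet_toLex_pos {ι : Type*} [LinearOrder ι] [Countable ι] :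
    MeasurableSet {x : ι → ℝ | 0 < toLex x} := by
  have h : {x : ι → ℝ | 0 < toLex x} = ⋃ i, (⋂ j ∈ Iio i, {x | 0 = x j}) ∩ {x | 0 < x i} := by
    ext x
    simp only [mem_iUnion, mem_inter_iff, mem_iInter, mem_ofPred_eq, mem_Iio]
    rfl
  rw [h]
  refine .iUnion fun i => .inter (.biInter (to_countable _) fun j _ => ?_) ?_
  · exact measurableSet_eq_fun measurable_const (measurable_pi_apply j)
  · exact measurableSet_lt measurable_const (measurable_pi_apply i)

section ProjectiveSection

variable {d : ℕ}

theorem measurable_projQ : Measurable (projQ (d := d)) := measurable_quotient_mk''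

open Classical in
def lexPosRep (x : Sph d) : Sph d := if 0 < toLex (x : Euc d).ofLp then x else -x

theorem measurable_lexPosRep : Measurable (lexPosRep (d := d)) := by
  have hcoe : Measurable fun x : Sph d => (x : Euc d).ofLp :=
    (PiLp.continuous_ofLp 2 _).measurable.comp measurable_subtype_coe
  exact .ite (hcoe measurableSet_toLex_pos) measurable_id continuous_neg.measurable

theorem lexPosRep_neg (x : Sph d) : lexPosRep (-x) = lexPosRep x := by
  have hx : toLex (x : Euc d).ofLp ≠ 0 := by
    simpa using ne_zero_of_mem_unit_sphere x
  have hneg : toLex ((-x : Sph d) : Euc d).ofLp = -toLex (x : Euc d).ofLp := by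
    rw [coe_neg_sphere, WithLp.ofLp_neg, toLex_neg]
  unfold lexPosRep
  rw [hneg, neg_neg]
  split_ifs with hnegpos hpos hpos
  · exact absurd hpos (neg_pos.mp hnegpos).not_gt
  · rfl
  · rfl
  · exact (hx.lt_or_gt.elim (fun h => hnegpos (neg_pos.mpr h)) hpos).elim

def projSection : Proj d → Sph d :=
  Quotient.lift lexPosRep <| by
    rintro x y (h | h)
    · rw [Subtype.ext h]
    · rw [show x = -y from Subtype.ext (h.trans (coe_neg_sphere y).symm), lexPosRep_neg]

theorem measurable_projSection : Measurable (projSection (d := d)) :=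
  measurable_from_quotient.2 measurable_lexPosRep

theorem projQ_projSection (p : Proj d) : projQ (projSection p) = p := by
  induction p using Quotient.ind with
  | _ x =>
    show projQ (lexPosRep x) = projQ x
    unfold lexPosRep
    split_ifs
    · rfl
    · exact Quotient.sound (Or.inr (coe_neg_sphere x))

end ProjectiveSection

theorem exists_measurable_map_restrict_Icc_eq {Y : Type*} [MeasurableSpace Y]
    [StandardBorelSpace Y] [Nonempty Y] (ν : Measure Y) [IsProbabilityMeasure ν] :
    ∃ φ : ℝ → Y, Measurable φ ∧ (volume.restrict (Icc (0 : ℝ) 1)).map φ = ν := by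
  obtain ⟨f, hf, hfν⟩ := ν.exists_measurable_map_eq
  have hproj : Measurable (projIcc (0 : ℝ) 1 zero_le_one) := continuous_projIcc.measurable
  refine ⟨f ∘ projIcc 0 1 zero_le_one, hf.comp hproj, ?_⟩
  rw [← Measure.map_map hf hproj, ← unitInterval.measurePreserving_coe.map_eq,
    Measure.map_map hproj measurable_subtype_coe]
  simp [Function.comp_def, hfν]

theorem hext_smul_coe_sphere {d : ℕ} (f : Proj d → ℝ) (x : Sph d) {r : ℝ} (hr : 0 ≤ r) :
    hext f (r • (x : Euc d)) = r * f (projQ x) := by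
  rcases hr.eq_or_lt with rfl | hr
  · simp [hext]
  have hx : ‖(x : Euc d)‖ = 1 := norm_eq_of_mem_sphere x
  have hrx : r • (x : Euc d) ≠ 0 := smul_ne_zero hr.ne' (ne_zero_of_mem_unit_sphere x)
  have hunit : unitize (r • (x : Euc d)) hrx = x := by
    ext1
    simp [unitize, norm_smul, hx, abs_of_pos hr, smul_smul, hr.ne']
  rw [hext, dif_neg hrx, hunit, norm_smul, hx, Real.norm_of_nonneg hr.le, mul_one]

theorem isACDeriv_integral {V : Type*} [NormedAddCommGroup V] [NormedSpace ℝ V]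
    {g : ℝ → V} (hg : IntervalIntegrable g volume 0 1) :
    IsACDeriv (fun t => ∫ s in (0 : ℝ)..t, g s) g :=
  ⟨hg, fun t _ => by simp⟩

theorem intervalIntegrable_smul_coe_sphere {d : ℕ} {φ : ℝ → Sph d} (hφ : Measurable φ)
    (r : ℝ) : IntervalIntegrable (fun t => r • (φ t : Euc d)) volume 0 1 := by
  rw [intervalIntegrable_iff_integrableOn_Ioc_of_le zero_le_one]
  refine Measure.integrableOn_of_bounded (M := |r|) measure_Ioc_lt_top.ne
    ((measurable_subtype_coe.comp hφ).const_smul r).aestronglyMeasurable ?_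
  filter_upwards with t
  simp [norm_smul, norm_eq_of_mem_sphere]

theorem isCurveMeasure_smul_map {d : ℕ} {φ : ℝ → Sph d} (hφ : Measurable φ) (c : ℝ≥0) :
    IsCurveMeasure (fun t => (c : ℝ) • (φ t : Euc d))
      (c • (volume.restrict (Icc (0 : ℝ) 1)).map (projQ ∘ φ)) := by
  have hQφ : Measurable (projQ ∘ φ) := measurable_projQ.comp hφ
  refine ⟨inferInstance, fun f hf => ?_⟩
  have hfm : Measurable f :=
    measurable_from_quotient.2 (hf.comp continuous_quotient_mk').measurable
  simp_rw [hext_smul_coe_sphere f _ c.coe_nonneg]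
  rw [integral_smul_nnreal_measure, integral_map hQφ.aemeasurable hfm.aestronglyMeasurable,
    intervalIntegral.integral_of_le zero_le_one, ← integral_Icc_eq_integral_Ioc,
    integral_const_mul, NNReal.smul_def, smul_eq_mul]
  rfl

theorem stmt17_general {d : ℕ} (μ : Measure (Proj d))
    (hfin : IsFiniteMeasure μ) :
    ∃ α g : ℝ → Euc d, IsACDeriv α g ∧ IsCurveMeasure g μ := by
  rcases eq_zero_or_neZero μ with rfl | hμ
  · exact ⟨_, 0, isACDeriv_integral intervalIntegrable_const, inferInstance, by simp [hext]⟩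
  have : Nonempty (Sph d) := (Measure.nonempty_of_neZero μ).map Quotient.out
  have : IsProbabilityMeasure (((μ univ)⁻¹ • μ).map projSection) :=
    Measure.isProbabilityMeasure_map measurable_projSection.aemeasurable
  obtain ⟨φ, hφ, hφν⟩ := exists_measurable_map_restrict_Icc_eq (((μ univ)⁻¹ • μ).map projSection)
  have hlaw : (volume.restrict (Icc (0 : ℝ) 1)).map (projQ ∘ φ) = (μ univ)⁻¹ • μ := by
    rw [← Measure.map_map measurable_projQ hφ, hφν,
      Measure.map_map measurable_projQ measurable_projSection]
    simp [Function.comp_def, projQ_projSection]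
  have hμ_eq : μ = (μ univ).toNNReal • (volume.restrict (Icc (0 : ℝ) 1)).map (projQ ∘ φ) := by
    rw [hlaw, ENNReal.smul_def, smul_smul, ENNReal.coe_toNNReal (measure_ne_top μ univ),
      ENNReal.mul_inv_cancel (NeZero.ne _) (measure_ne_top μ univ), one_smul]
  exact ⟨_, _, isACDeriv_integral (intervalIntegrable_smul_coe_sphere hφ _),
    hμ_eq ▸ isCurveMeasure_smul_map hφ _⟩

/-- The correspondence `α ↦ μ_α` is surjective onto the set
of positive finite Borel measures on `P^{d-1}`: for every positive finite
Borel measure `μ` on `P^{d-1}` there is an absolutely continuous curve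
`α : [0,1] → ℝ^d` with `μ_α = μ`. -/
theorem stmt17 {d : ℕ} (hd : 1 ≤ d) (μ : Measure (Proj d))
    (hfin : IsFiniteMeasure μ) :
    ∃ α g : ℝ → Euc d, IsACDeriv α g ∧ IsCurveMeasure g μ :=
  stmt17_general μ hfin
end
end

section
/- Let E ⊆ [0,1] be a Lebesgue measurable set. There exists a strictly monotonic (increasing), right-continuous function φ:[0,1]→[0,1] such that for almost every s ∈ [0,1], φ is differentiable at s and χ_E(φ(s))·φ'(s) = λ(E), where λ is Lebesgue measure and χ_E is the indicator function of E. -/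
/-!
Let `μ` be normalized Lebesgue measure on `E` and `ψ` its distribution function; it is continuous
and increases from `0` to `1` on `[0,1]`. Its upper inverse `φ s = sup {t ∈ [0,1] | ψ t ≤ s}`
satisfies `ψ ∘ φ = id` on `[0,1]`, is increasing and right-continuous, and pushes Lebesgue
measure on `(0,1)` forward to `μ`. Hence for almost every `s`, the point `φ s` lies in `E` and is
a Lebesgue point where `ψ' = 1 / λ(E)`, while `φ` is continuous at `s`; differentiating
`ψ ∘ φ = id` gives `φ' s = λ(E)`. If `λ(E) = 0`, the identity works.
-/

open MeasureTheory Set Filter Topology ProbabilityTheory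

noncomputable section

def upperQuantile (F : ℝ → ℝ) (s : ℝ) : ℝ := sSup {t ∈ Icc (0 : ℝ) 1 | F t ≤ s}

section upperQuantile

variable {F : ℝ → ℝ} {s x : ℝ}

lemma bddAbove_sublevel_Icc (F : ℝ → ℝ) (s : ℝ) :
    BddAbove {t ∈ Icc (0 : ℝ) 1 | F t ≤ s} :=
  ⟨1, fun _ ht => ht.1.2⟩

lemma upperQuantile_nonneg : 0 ≤ upperQuantile F s :=
  Real.sSup_nonneg fun _ ht => ht.1.1

lemma upperQuantile_le_one : upperQuantile F s ≤ 1 :=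
  Real.sSup_le (fun _ ht => ht.1.2) zero_le_one

lemma mapsTo_upperQuantile : MapsTo (upperQuantile F) (Icc 0 1) (Icc 0 1) :=
  fun _ _ => ⟨upperQuantile_nonneg, upperQuantile_le_one⟩

lemma monotone_upperQuantile : Monotone (upperQuantile F) := by
  intro s s' hss'
  rcases eq_empty_or_nonempty {t ∈ Icc (0 : ℝ) 1 | F t ≤ s} with h | h
  · rw [upperQuantile, h, Real.sSup_empty]
    exact upperQuantile_nonneg
  · exact csSup_le_csSup (bddAbove_sublevel_Icc F s') h fun t ht => ⟨ht.1, ht.2.trans hss'⟩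

lemma upperQuantile_le_of_lt (hF : Monotone F) (hs : F 0 ≤ s) (hx : s < F x) :
    upperQuantile F s ≤ x :=
  csSup_le ⟨0, ⟨le_rfl, zero_le_one⟩, hs⟩ fun _ ht =>
    (hF.reflect_lt (ht.2.trans_lt hx)).le

lemma apply_upperQuantile (hF : Monotone F) (hFc : Continuous F) (h0 : F 0 = 0) (h1 : F 1 = 1)
    (hs : s ∈ Icc 0 1) : F (upperQuantile F s) = s := by
  set S := {t ∈ Icc (0 : ℝ) 1 | F t ≤ s}
  have hS : S.Nonempty := ⟨0, ⟨le_rfl, zero_le_one⟩, h0.trans_le hs.1⟩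
  have hmem : upperQuantile F s ∈ S :=
    (isClosed_Icc.inter (isClosed_le hFc continuous_const)).csSup_mem hS
      (bddAbove_sublevel_Icc F s)
  obtain ⟨t, ht, hts⟩ : s ∈ F '' Icc 0 1 :=
    intermediate_value_Icc zero_le_one hFc.continuousOn (by rwa [h0, h1])
  refine le_antisymm hmem.2 ?_
  calc s = F t := hts.symm
    _ ≤ F (upperQuantile F s) := hF (le_csSup (bddAbove_sublevel_Icc F s) ⟨ht, hts.le⟩)

lemma strictMonoOn_upperQuantile (hF : Monotone F) (hFc : Continuous F) (h0 : F 0 = 0)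
    (h1 : F 1 = 1) : StrictMonoOn (upperQuantile F) (Icc 0 1) :=
  (monotone_upperQuantile.monotoneOn _).strictMonoOn_of_injOn fun s hs s' hs' h => by
    rw [← apply_upperQuantile hF hFc h0 h1 hs, h, apply_upperQuantile hF hFc h0 h1 hs']

lemma continuousWithinAt_Ici_upperQuantile (hF : Monotone F) (h0 : F 0 = 0) (hs : 0 ≤ s) :
    ContinuousWithinAt (upperQuantile F) (Ici s) s := by
  refine tendsto_order.2 ⟨fun a ha => eventually_nhdsWithin_of_forall fun u hu =>
    ha.trans_le (monotone_upperQuantile hu), fun x hx => ?_⟩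
  obtain ⟨y, hy, hyx⟩ := exists_between hx
  rcases le_or_gt y 1 with hy1 | hy1
  · have hsy : s < F y := by
      by_contra! h
      exact hy.not_ge (le_csSup (bddAbove_sublevel_Icc F s)
        ⟨⟨upperQuantile_nonneg.trans hy.le, hy1⟩, h⟩)
    filter_upwards [Ico_mem_nhdsGE hsy] with u hu
    exact (upperQuantile_le_of_lt hF (h0.trans_le (hs.trans hu.1)) hu.2).trans_lt hyx
  · exact Eventually.of_forall fun u => upperQuantile_le_one.trans_lt (hy1.trans hyx)

lemma hasDerivAt_upperQuantile (hF : Monotone F) (hFc : Continuous F) (h0 : F 0 = 0)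
    (h1 : F 1 = 1) {d : ℝ} (hs : s ∈ Ioo 0 1) (hc : ContinuousAt (upperQuantile F) s)
    (hd : HasDerivAt F d (upperQuantile F s)) (hd0 : d ≠ 0) :
    HasDerivAt (upperQuantile F) d⁻¹ s :=
  hd.of_local_left_inverse hc hd0 <| eventually_of_mem (Ioo_mem_nhds hs.1 hs.2) fun _ hu =>
    apply_upperQuantile hF hFc h0 h1 (Ioo_subset_Icc_self hu)

end upperQuantile

section cdf

variable {μ : Measure ℝ} [IsProbabilityMeasure μ]

lemma map_upperQuantile_cdf (hc : Continuous (cdf μ)) (h0 : cdf μ 0 = 0) (h1 : cdf μ 1 = 1) :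
    (volume.restrict (Ioo 0 1)).map (upperQuantile (cdf μ)) = μ := by
  have hm : Measurable (upperQuantile (cdf μ)) := monotone_upperQuantile.measurable
  refine Measure.ext_of_Iic _ _ fun x => ?_
  rw [Measure.map_apply hm measurableSet_Iic, Measure.restrict_apply (hm measurableSet_Iic)]
  have hlow : Ioo 0 (cdf μ x) ⊆ upperQuantile (cdf μ) ⁻¹' Iic x ∩ Ioo 0 1 := fun s hs =>
    ⟨upperQuantile_le_of_lt (cdf μ).mono (h0.trans_le hs.1.le) hs.2,
      hs.1, hs.2.trans_le (cdf_le_one μ x)⟩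
  have hupp : upperQuantile (cdf μ) ⁻¹' Iic x ∩ Ioo 0 1 ⊆ Ioc 0 (cdf μ x) := fun s hs =>
    ⟨hs.2.1, apply_upperQuantile (cdf μ).mono hc h0 h1 (Ioo_subset_Icc_self hs.2) ▸
      (cdf μ).mono hs.1⟩
  have hge := measure_mono (μ := volume) hlow
  have hle := measure_mono (μ := volume) hupp
  rw [Real.volume_Ioo, sub_zero] at hge
  rw [Real.volume_Ioc, sub_zero] at hle
  rw [le_antisymm hle hge, cdf_eq_real, measureReal_def,
    ENNReal.ofReal_toReal (measure_ne_top _ _)]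

lemma ae_comp_upperQuantile_cdf (hc : Continuous (cdf μ)) (h0 : cdf μ 0 = 0) (h1 : cdf μ 1 = 1)
    {p : ℝ → Prop} (h : ∀ᵐ t ∂μ, p t) :
    ∀ᵐ s ∂volume.restrict (Ioo 0 1), p (upperQuantile (cdf μ) s) :=
  ae_of_ae_map monotone_upperQuantile.measurable.aemeasurable
    (by rwa [map_upperQuantile_cdf hc h0 h1])

end cdf

lemma StieltjesFunction.continuous_of_measure_singleton (f : StieltjesFunction ℝ)
    (h : ∀ a, f.measure {a} = 0) : Continuous f := by
  refine continuous_iff_continuousAt.2 fun a => continuousAt_iff_continuous_left'_right'.2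
    ⟨f.mono.continuousWithinAt_Iio_iff_leftLim_eq.2 ?_,
      (f.right_continuous a).mono Ioi_subset_Ici_self⟩
  have hjump := f.measure_singleton a
  rw [h, eq_comm, ENNReal.ofReal_eq_zero, sub_nonpos] at hjump
  exact le_antisymm (f.mono.leftLim_le le_rfl) hjump

lemma ProbabilityTheory.continuous_cdf_of_absolutelyContinuous {μ : Measure ℝ}
    [IsProbabilityMeasure μ] (hμ : μ ≪ volume) : Continuous (cdf μ) :=
  (cdf μ).continuous_of_measure_singleton fun a => by
    rw [measure_cdf]
    exact hμ Real.volume_singleton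

lemma volume_ne_top_of_subset_Icc {E : Set ℝ} {a b : ℝ} (hsub : E ⊆ Icc a b) : volume E ≠ ⊤ :=
  ((measure_mono hsub).trans_lt measure_Icc_lt_top).ne

section cond

variable {E : Set ℝ}

lemma cdf_volume_cond_zero (hsub : E ⊆ Icc 0 1) (hE0 : volume E ≠ 0) :
    cdf (volume[|E]) 0 = 0 := by
  have := cond_isProbabilityMeasure_of_finite hE0 (volume_ne_top_of_subset_Icc hsub)
  have hnull : volume (E ∩ Iic 0) = 0 :=
    measure_mono_null (fun t ht => le_antisymm ht.2 (hsub ht.1).1) Real.volume_singleton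
  rw [cdf_eq_real, measureReal_def, cond_apply' measurableSet_Iic, hnull, mul_zero,
    ENNReal.toReal_zero]

lemma cdf_volume_cond_one (hsub : E ⊆ Icc 0 1) (hE0 : volume E ≠ 0) :
    cdf (volume[|E]) 1 = 1 := by
  have hfin := volume_ne_top_of_subset_Icc hsub
  have := cond_isProbabilityMeasure_of_finite hE0 hfin
  rw [cdf_eq_real, measureReal_def, cond_apply' measurableSet_Iic,
    inter_eq_left.2 (hsub.trans Icc_subset_Iic_self), ENNReal.inv_mul_cancel hE0 hfin,
    ENNReal.toReal_one]

lemma ae_cond_mem_and_hasDerivAt_cdf (hE : MeasurableSet E) (hE0 : volume E ≠ 0)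
    (hEtop : volume E ≠ ⊤) :
    ∀ᵐ t ∂volume[|E], t ∈ E ∧ HasDerivAt (cdf (volume[|E])) (volume E).toReal⁻¹ t := by
  have := cond_isProbabilityMeasure_of_finite hE0 hEtop
  have := isFiniteMeasure_restrict.2 hEtop
  have hdens : (volume[|E]).rnDeriv volume =ᵐ[volume] (volume E)⁻¹ • E.indicator 1 :=
    (Measure.rnDeriv_smul_left_of_ne_top _ _ (ENNReal.inv_ne_top.2 hE0)).trans
      ((Measure.rnDeriv_restrict_self volume hE).mono fun t ht => by
        simp only [Pi.smul_apply, ht])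
  have hderiv := (cdf (volume[|E])).ae_hasDerivAt
  rw [measure_cdf] at hderiv
  have hlebesgue : ∀ᵐ t, t ∈ E → HasDerivAt (cdf (volume[|E])) (volume E).toReal⁻¹ t := by
    filter_upwards [hderiv, hdens] with t ht hdens htE
    simpa [hdens, htE] using ht
  filter_upwards [ae_cond_mem hE, cond_absolutelyContinuous.ae_le hlebesgue] with t ht hd
  exact ⟨ht, hd ht⟩

end cond

/-- Let `E ⊆ [0,1]` be a Lebesgue measurable set.  There
exists a strictly monotonic (increasing), right-continuous function
`φ : [0,1] → [0,1]` such that for almost every `s ∈ [0,1]`, `φ` is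
differentiable at `s` and `χ_E(φ(s)) ⋅ φ'(s) = λ(E)`. -/
theorem stmt18 (E : Set ℝ) (hmeas : MeasurableSet E) (hsub : E ⊆ Icc 0 1) :
    ∃ φ : ℝ → ℝ,
      StrictMonoOn φ (Icc 0 1) ∧
      MapsTo φ (Icc 0 1) (Icc 0 1) ∧
      (∀ s ∈ Icc (0:ℝ) 1, ContinuousWithinAt φ (Ici s) s) ∧
      ∀ᵐ s ∂volume.restrict (Icc (0:ℝ) 1),
        ∃ D : ℝ, HasDerivAt φ D s ∧
          E.indicator (fun _ => (1:ℝ)) (φ s) * D = (volume E).toReal := by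
  rcases eq_or_ne (volume E) 0 with hE0 | hE0
  · refine ⟨id, strictMonoOn_id, mapsTo_id _, fun _ _ => continuousWithinAt_id, ?_⟩
    filter_upwards [ae_restrict_of_ae (measure_eq_zero_iff_ae_notMem.1 hE0)] with s hs
    exact ⟨1, hasDerivAt_id s, by simp [hs, hE0]⟩
  have hEtop := volume_ne_top_of_subset_Icc hsub
  have := cond_isProbabilityMeasure_of_finite hE0 hEtop
  have hmono := (cdf (volume[|E])).mono
  have hc := continuous_cdf_of_absolutelyContinuous (cond_absolutelyContinuous (s := E))
  have h0 := cdf_volume_cond_zero hsub hE0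
  have h1 := cdf_volume_cond_one hsub hE0
  refine ⟨upperQuantile (cdf (volume[|E])), strictMonoOn_upperQuantile hmono hc h0 h1,
    mapsTo_upperQuantile, fun s hs => continuousWithinAt_Ici_upperQuantile hmono h0 hs.1, ?_⟩
  rw [← restrict_Ioo_eq_restrict_Icc]
  filter_upwards [ae_comp_upperQuantile_cdf hc h0 h1
      (ae_cond_mem_and_hasDerivAt_cdf hmeas hE0 hEtop),
    ae_restrict_mem measurableSet_Ioo,
    ae_restrict_of_ae (monotone_upperQuantile.countable_not_continuousAt.ae_notMem _)]
    with s ⟨hsE, hd⟩ hs hcont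
  have hinv : (volume E).toReal⁻¹ ≠ 0 := inv_ne_zero (ENNReal.toReal_pos hE0 hEtop).ne'
  refine ⟨(volume E).toReal, ?_, by simp [hsE]⟩
  rw [← inv_inv (volume E).toReal]
  exact hasDerivAt_upperQuantile hmono hc h0 h1 hs (not_not.1 hcont) hd hinv
end
end
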